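/- On R^3 with coordinates x,y,z each of weight 1, let a = (1/3)(x³+y³+z³) and P the Nambu-type Poisson bivector {f,g} = det(∂(a,f,g)/∂(x,y,z)), which has quadratic homogeneous components. Then there exists no vector field V with polynomial coefficients such that [[V,P]] = P. -/

import Mathlib

open scoped BigOperators

/-- Partial derivative `∂_k f` of a scalar function on `ℝ^r`. -/
noncomputable def pd {r : ℕ} (k : Fin r) (f : (Fin r → ℝ) → ℝ) : (Fin r → ℝ) → ℝ :=
  fun x => fderiv ℝ f x (Pi.single k 1)

/-- Components of the Schouten bracket (Lie derivative) `[[V,P]]` of a vector field `V`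
with a bivector `P`. -/
noncomputable def lieD {r : ℕ} (V : Fin r → (Fin r → ℝ) → ℝ)
    (P : Fin r → Fin r → (Fin r → ℝ) → ℝ) (i j : Fin r) (x : Fin r → ℝ) : ℝ :=
  ∑ k, (V k x * pd k (P i j) x - P k j x * pd k (V i) x - P i k x * pd k (V j) x)

/-- The Nambu bivector on `ℝ^3` with Casimir `a = (x³+y³+z³)/3` and density `ρ ≡ 1`:
`P^{xy} = z²`, `P^{yz} = x²`, `P^{zx} = y²`. -/
noncomputable def P13 : Fin 3 → Fin 3 → (Fin 3 → ℝ) → ℝ := fun i j x =>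
  !![0,          (x 2)^2,    -(x 1)^2;
     -((x 2)^2), 0,          (x 0)^2;
     (x 1)^2,    -((x 0)^2), 0] i j

/-! Only the linear part of `V` matters. The coefficient of `x_i²` in the `(i+1, i+2)` component
of `L_V P = P` involves just the diagonal entries `c_i` of that linear part (the coefficient of
`x_i` in `V^i`) and reads `2 c_i - c_{i+1} - c_{i+2} = 1`; summing the three cyclic instances
gives `0 = 3`. -/

open MvPolynomial

lemma hasFDerivAt_eval {r : ℕ} (p : MvPolynomial (Fin r) ℝ) (x : Fin r → ℝ) :
    HasFDerivAt (fun y : Fin r → ℝ => eval y p)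
      (∑ k, eval x (pderiv k p) • ContinuousLinearMap.proj (R := ℝ) (φ := fun _ : Fin r => ℝ) k)
      x := by
  induction p using MvPolynomial.induction_on with
  | C a => simpa using hasFDerivAt_const a x
  | add p q hp hq =>
    simp only [map_add, add_smul, Finset.sum_add_distrib]
    exact hp.add hq
  | mul_X p n hp =>
    simp only [eval_mul, eval_X]
    refine (hp.mul (hasFDerivAt_apply n x)).congr_fderiv ?_
    ext v
    simp [pderiv_X, Pi.single_apply, apply_ite (eval x), mul_add, Finset.sum_add_distrib,
      Finset.mul_sum, mul_comm, mul_left_comm]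

lemma pd_eval {r : ℕ} (k : Fin r) (p : MvPolynomial (Fin r) ℝ) (x : Fin r → ℝ) :
    pd k (fun y => eval y p) x = eval x (pderiv k p) := by
  simp [pd, (hasFDerivAt_eval p x).fderiv, Pi.single_apply]

noncomputable def polyLieD {σ R : Type*} [Fintype σ] [CommRing R] (V : σ → MvPolynomial σ R)
    (Q : σ → σ → MvPolynomial σ R) (i j : σ) : MvPolynomial σ R :=
  ∑ k, (V k * pderiv k (Q i j) - Q k j * pderiv k (V i) - Q i k * pderiv k (V j))

lemma lieD_eval {r : ℕ} (V : Fin r → MvPolynomial (Fin r) ℝ)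
    (Q : Fin r → Fin r → MvPolynomial (Fin r) ℝ) (i j : Fin r) (x : Fin r → ℝ) :
    lieD (fun k x => eval x (V k)) (fun i j x => eval x (Q i j)) i j x =
      eval x (polyLieD V Q i j) := by
  simp [lieD, polyLieD, pd_eval]

noncomputable def nambuPoly : Fin 3 → Fin 3 → MvPolynomial (Fin 3) ℝ :=
  !![0,           X 2 ^ 2,    -(X 1 ^ 2);
     -(X 2 ^ 2),  0,          X 0 ^ 2;
     X 1 ^ 2,     -(X 0 ^ 2), 0]

lemma P13_eq_eval : P13 = fun i j x => eval x (nambuPoly i j) := by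
  ext i j x
  fin_cases i <;> fin_cases j <;> simp [P13, nambuPoly]

lemma polyLieD_nambuPoly_eq {V : Fin 3 → MvPolynomial (Fin 3) ℝ}
    (hV : ∀ i j x, lieD (fun k x => eval x (V k)) P13 i j x = P13 i j x) (i j : Fin 3) :
    polyLieD V nambuPoly i j = nambuPoly i j :=
  MvPolynomial.funext fun x => by simpa [P13_eq_eval, lieD_eval] using hV i j x

lemma coeff_single_two_X_sq_mul {σ R : Type*} [CommSemiring R] [DecidableEq σ] (i j : σ)
    (p : MvPolynomial σ R) :
    coeff (Finsupp.single j 2) (X i ^ 2 * p) = if i = j then coeff 0 p else 0 := by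
  rw [X_pow_eq_monomial, coeff_monomial_mul']
  split_ifs <;> simp_all [Finsupp.single_le_iff]

lemma coeff_single_two_mul_X {σ R : Type*} [CommSemiring R] (i : σ) (p : MvPolynomial σ R) :
    coeff (Finsupp.single i 2) (p * X i) = coeff (Finsupp.single i 1) p := by
  rw [← coeff_mul_X _ i p, ← Finsupp.single_add]

lemma coeff_sq_polyLieD_nambuPoly (V : Fin 3 → MvPolynomial (Fin 3) ℝ) (i : Fin 3) :
    coeff (Finsupp.single i 2) (polyLieD V nambuPoly (i + 1) (i + 2)) =
      2 * coeff (Finsupp.single i 1) (V i) - coeff (Finsupp.single (i + 1) 1) (V (i + 1))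
        - coeff (Finsupp.single (i + 2) 1) (V (i + 2)) := by
  fin_cases i <;>
    simp [polyLieD, nambuPoly, Fin.sum_univ_three, coeff_single_two_X_sq_mul, coeff_pderiv,
      two_mul, mul_add, coeff_single_two_mul_X]

lemma coeff_sq_nambuPoly (i : Fin 3) :
    coeff (Finsupp.single i 2) (nambuPoly (i + 1) (i + 2)) = 1 := by
  fin_cases i <;> simp [nambuPoly, X_pow_eq_monomial]

/-- there is no vector field `V` with polynomial coefficients such that
`[[V,P]] = P` for the Nambu bivector `P` with Casimir `a = (x³+y³+z³)/3`. -/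
theorem statement13 :
    ¬ ∃ V : Fin 3 → MvPolynomial (Fin 3) ℝ,
        ∀ i j x, lieD (fun k x => MvPolynomial.eval x (V k)) P13 i j x = P13 i j x := by
  rintro ⟨V, hV⟩
  set c : Fin 3 → ℝ := fun i => coeff (Finsupp.single i 1) (V i)
  have hc (i : Fin 3) : 2 * c i - c (i + 1) - c (i + 2) = 1 := by
    rw [← coeff_sq_nambuPoly i, ← polyLieD_nambuPoly_eq hV, coeff_sq_polyLieD_nambuPoly]
  have h0 := hc 0
  have h1 := hc 1
  have h2 := hc 2
  simp only [Fin.reduceAdd] at h0 h1 h2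
  linarith
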